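/- Let V be a ℤ-module with a symmetric bilinear form such that cᵢ·cⱼ ≥ 0 for all distinct indices i ≠ j, where c₁, …, cₙ ∈ V. Let a, b : Fin n → ℕ with Σ aᵢcᵢ = Σ bᵢcᵢ =: e. Define d = Σᵢ max(aᵢ - bᵢ, 0)·cᵢ (and note d also equals Σᵢ max(bᵢ - aᵢ, 0)·cᵢ). Then (e - d)·d ≥ 0; in particular e·d ≥ d·d. -/

import Mathlib

/-!
Write `d = ∑ pᵢ cᵢ` with `pᵢ = max (aᵢ - bᵢ) 0` and `qᵢ = max (bᵢ - aᵢ) 0`. Since `p - q = a - b` and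
`∑ aᵢ cᵢ = ∑ bᵢ cᵢ`, also `d = ∑ qᵢ cᵢ`. For each `i` one of `pᵢ`, `qᵢ` vanishes, and the
representation of `d` in which `cᵢ` does not occur shows `cᵢ · d ≥ 0` by positivity of the
off-diagonal products. Finally `e - d = ∑ min (aᵢ, bᵢ) cᵢ` has nonnegative coefficients.
-/

open Finset

section

variable {ι R V : Type*} [Fintype ι] [CommRing R] [LinearOrder R] [IsStrictOrderedRing R]
  [AddCommGroup V] [Module R V]

theorem sum_max_sub_smul_eq_of_sum_smul_eq {a b : ι → R} {c : ι → V}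
    (h : ∑ i, a i • c i = ∑ i, b i • c i) :
    ∑ i, max (a i - b i) 0 • c i = ∑ i, max (b i - a i) 0 • c i := by
  rw [← sub_eq_zero, ← sum_sub_distrib]
  simp_rw [← sub_smul, ← neg_sub (a _), max_zero_sub_max_neg_zero_eq_self, sub_smul]
  rw [sum_sub_distrib, h, sub_self]

theorem sum_smul_sub_sum_max_sub_smul (a b : ι → R) (c : ι → V) :
    ∑ i, a i • c i - ∑ i, max (a i - b i) 0 • c i = ∑ i, min (b i) (a i) • c i := by
  rw [← sum_sub_distrib]
  refine sum_congr rfl fun i _ => ?_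
  rw [← sub_smul, ← min_sub_sub_left, sub_sub_cancel, sub_zero]

theorem apply_sum_smul_nonneg_of_apply_eq_zero (φ : V →ₗ[R] R) {c : ι → V} {f : ι → R} {i : ι}
    (hpos : ∀ j, j ≠ i → 0 ≤ φ (c j)) (hf : 0 ≤ f) (hfi : f i = 0) :
    0 ≤ φ (∑ j, f j • c j) := by
  rw [map_sum]
  refine sum_nonneg fun j _ => ?_
  rw [map_smul, smul_eq_mul]
  rcases eq_or_ne j i with rfl | hji
  · simp [hfi]
  · exact mul_nonneg (hf j) (hpos j hji)

theorem apply_sum_max_sub_smul_nonneg (φ : V →ₗ[R] R) {a b : ι → R} {c : ι → V}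
    (h : ∑ i, a i • c i = ∑ i, b i • c i) {i : ι} (hpos : ∀ j, j ≠ i → 0 ≤ φ (c j)) :
    0 ≤ φ (∑ j, max (a j - b j) 0 • c j) := by
  rcases le_total (a i) (b i) with hab | hba
  · exact apply_sum_smul_nonneg_of_apply_eq_zero φ hpos (fun j => le_max_right _ _)
      (max_eq_right (sub_nonpos.2 hab))
  · rw [sum_max_sub_smul_eq_of_sum_smul_eq h]
    exact apply_sum_smul_nonneg_of_apply_eq_zero φ hpos (fun j => le_max_right _ _)
      (max_eq_right (sub_nonpos.2 hba))

theorem bilin_sub_sum_max_sub_smul_nonneg (B : V →ₗ[R] V →ₗ[R] R) {c : ι → V}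
    (hpos : ∀ i j, i ≠ j → 0 ≤ B (c i) (c j)) {a b : ι → R} (ha : 0 ≤ a) (hb : 0 ≤ b)
    (h : ∑ i, a i • c i = ∑ i, b i • c i) :
    0 ≤ B (∑ i, a i • c i - ∑ i, max (a i - b i) 0 • c i) (∑ i, max (a i - b i) 0 • c i) := by
  rw [sum_smul_sub_sum_max_sub_smul, map_sum B, LinearMap.sum_apply]
  refine sum_nonneg fun i _ => ?_
  rw [map_smul, LinearMap.smul_apply, smul_eq_mul]
  exact mul_nonneg (le_min (hb i) (ha i))
    (apply_sum_max_sub_smul_nonneg (B (c i)) h fun j hji => hpos i j hji.symm)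

end

theorem stmt_2_general {V : Type*} [AddCommGroup V] [Module ℤ V]
    (B : V →ₗ[ℤ] V →ₗ[ℤ] ℤ)
    {n : ℕ} (c : Fin n → V)
    (hpos : ∀ i j, i ≠ j → 0 ≤ B (c i) (c j))
    (a b : Fin n → ℕ) (e d : V)
    (he : e = ∑ i, (a i : ℤ) • c i)
    (he' : e = ∑ i, (b i : ℤ) • c i)
    (hd : d = ∑ i, (max ((a i : ℤ) - (b i : ℤ)) 0) • c i) :
    d = ∑ i, (max ((b i : ℤ) - (a i : ℤ)) 0) • c i ∧
      0 ≤ B (e - d) d ∧ B d d ≤ B e d := by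
  -- The `•` in the hypotheses is `zsmul`, while `B` is linear for the given `ℤ`-module structure;
  -- these agree because `ℤ`-module structures are unique.
  obtain rfl : ‹Module ℤ V› = AddCommGroup.toIntModule V := Subsingleton.elim _ _
  have hab : ∑ i, (a i : ℤ) • c i = ∑ i, (b i : ℤ) • c i := he ▸ he'
  have hed : 0 ≤ B (e - d) d := by
    rw [hd, he]
    exact bilin_sub_sum_max_sub_smul_nonneg B hpos (fun i => Int.natCast_nonneg (a i))
      (fun i => Int.natCast_nonneg (b i)) hab
  refine ⟨hd ▸ sum_max_sub_smul_eq_of_sum_smul_eq hab, hed, ?_⟩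
  rw [map_sub, LinearMap.sub_apply] at hed
  linarith

/-- positivity of intersections `cᵢ·cⱼ ≥ 0` for `i ≠ j`, with
`e = ∑ aᵢcᵢ = ∑ bᵢcᵢ` and `d = ∑ max(aᵢ-bᵢ,0)cᵢ`, gives `d = ∑ max(bᵢ-aᵢ,0)cᵢ`,
`(e-d)·d ≥ 0` and `e·d ≥ d·d`. -/
theorem stmt_2 {V : Type*} [AddCommGroup V] [Module ℤ V]
    (B : V →ₗ[ℤ] V →ₗ[ℤ] ℤ) (hsymm : ∀ x y, B x y = B y x)
    {n : ℕ} (c : Fin n → V)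
    (hpos : ∀ i j, i ≠ j → 0 ≤ B (c i) (c j))
    (a b : Fin n → ℕ) (e d : V)
    (he : e = ∑ i, (a i : ℤ) • c i)
    (he' : e = ∑ i, (b i : ℤ) • c i)
    (hd : d = ∑ i, (max ((a i : ℤ) - (b i : ℤ)) 0) • c i) :
    d = ∑ i, (max ((b i : ℤ) - (a i : ℤ)) 0) • c i ∧
      0 ≤ B (e - d) d ∧ B d d ≤ B e d :=
  stmt_2_general B c hpos a b e d he he' hd
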